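/- If the assignment vector D ∈ {0,1}^n is exchangeable-free but satisfies, conditional on 𝒞_i, that all components are mutually independent, and T_i = f(D_{N(i,K)}) is any K-neighborhood exposure mapping with P(T_i = s | 𝒞_i) > 0, then E[Y_i | T_i = s, 𝒞_i] = Σ_{d} E[Y_i(d) | 𝒞_i] P(D_{N(i,K)} = d_{N(i,K)} | T_i=s, 𝒞_i) P(D_{−N(i,K)} = d_{−N(i,K)} | 𝒞_i), given unconfoundedness Y_i(·) ⊥ D | 𝒞_i. -/

import Mathlib

open Finset
open scoped Classical

noncomputable section

/-- Probability of event `A` under mass function `p` on a finite space. -/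
def prb {Ω : Type*} [Fintype Ω] (p : Ω → ℝ) (A : Ω → Prop) : ℝ :=
  ∑ ω, if A ω then p ω else 0

/-- Unnormalized expectation of `f` on the event `A`. -/
def eiv {Ω : Type*} [Fintype Ω] (p : Ω → ℝ) (f : Ω → ℝ) (A : Ω → Prop) : ℝ :=
  ∑ ω, if A ω then p ω * f ω else 0

/-- Expectation of `f`. -/
def expv {Ω : Type*} [Fintype Ω] (p : Ω → ℝ) (f : Ω → ℝ) : ℝ := ∑ ω, p ω * f ω

/-- Conditional expectation of `f` given the event `A`. -/
def cexp {Ω : Type*} [Fintype Ω] (p : Ω → ℝ) (f : Ω → ℝ) (A : Ω → Prop) : ℝ :=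
  eiv p f A / prb p A

/-- Conditional probability of `A` given `B`. -/
def cpr {Ω : Type*} [Fintype Ω] (p : Ω → ℝ) (A B : Ω → Prop) : ℝ :=
  prb p (fun ω => A ω ∧ B ω) / prb p B

/-- Real value of a boolean treatment. -/
def bR : Bool → ℝ := fun x => if x then 1 else 0

/-!
Split the numerator of `E[Yᵢ | Tᵢ = s, 𝒞ᵢ]` over the value `d` of the whole assignment vector.
On `{D = d} ∩ 𝒞ᵢ` the realized outcome is the potential outcome `Yᵢ(d)`, and unconfoundedness
makes its mean there `E[Yᵢ(d) | 𝒞ᵢ] · P(D = d, 𝒞ᵢ)`. Conditional independence factors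
`P(D = d | 𝒞ᵢ)` into the laws of the `N(i,K)`-block and of the complementary block (a block's law is
the product of its coordinate laws, because the other coordinate laws sum to one). Since the exposure
reads only the `N(i,K)`-block, intersecting that block event with `{Tᵢ = s}` changes nothing when
`f(d) = s` and leaves the empty event otherwise.
-/

section FiniteProbability

variable {Ω : Type*} [Fintype Ω] (p : Ω → ℝ)

lemma prb_eq_eiv_one (A : Ω → Prop) : prb p A = eiv p (fun _ => 1) A := by
  simp only [prb, eiv, mul_one]

lemma prb_congr {A B : Ω → Prop} (h : ∀ ω, A ω ↔ B ω) : prb p A = prb p B := by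
  simp only [prb, h]

lemma prb_and_eq_cpr_mul {B : Ω → Prop} (hB : prb p B ≠ 0) (A : Ω → Prop) :
    prb p (fun ω => A ω ∧ B ω) = cpr p A B * prb p B :=
  (div_mul_cancel₀ _ hB).symm

lemma cpr_eq_zero_of_prb_eq_zero {A B : Ω → Prop} (h : prb p (fun ω => A ω ∧ B ω) = 0) :
    cpr p A B = 0 := by
  rw [cpr, h, zero_div]

lemma eiv_comp_eq_sum_fiber {α : Type*} [Fintype α] (X : Ω → α) (h : α → Ω → ℝ)
    (Q : α → Prop) (R : Ω → Prop) :
    eiv p (fun ω => h (X ω) ω) (fun ω => Q (X ω) ∧ R ω) =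
      ∑ a, if Q a then eiv p (h a) (fun ω => X ω = a ∧ R ω) else 0 := by
  have hfiber : ∀ ω, (if Q (X ω) ∧ R ω then p ω * h (X ω) ω else 0) =
      ∑ a, if Q a then (if X ω = a ∧ R ω then p ω * h a ω else 0) else 0 := by
    intro ω
    rw [sum_eq_single (X ω) (fun a _ ha => by simp [Ne.symm ha]) (by simp)]
    by_cases hQ : Q (X ω) <;> simp [hQ]
  simp only [eiv, hfiber]
  rw [sum_comm]
  refine sum_congr rfl fun a _ => ?_
  by_cases hQ : Q a
  · simp only [hQ, if_true]
    congr! -- the two sides differ only in their `Decidable` instances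
  · simp [hQ]

lemma prb_comp_eq_sum_fiber {α : Type*} [Fintype α] (X : Ω → α) (Q : α → Prop) (R : Ω → Prop) :
    prb p (fun ω => Q (X ω) ∧ R ω) =
      ∑ a, if Q a then prb p (fun ω => X ω = a ∧ R ω) else 0 := by
  simp only [prb_eq_eiv_one]
  exact eiv_comp_eq_sum_fiber p X (fun _ _ => 1) Q R

lemma cpr_comp_eq_sum_fiber {α : Type*} [Fintype α] (X : Ω → α) (Q : α → Prop) (B : Ω → Prop) :
    cpr p (fun ω => Q (X ω)) B = ∑ a, if Q a then cpr p (fun ω => X ω = a) B else 0 := by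
  rw [cpr, prb_comp_eq_sum_fiber, sum_div]
  refine sum_congr rfl fun a _ => ?_
  split_ifs <;> simp [cpr]

lemma sum_cpr_eq_one {α : Type*} [Fintype α] (X : Ω → α) {B : Ω → Prop} (hB : prb p B ≠ 0) :
    ∑ a, cpr p (fun ω => X ω = a) B = 1 := by
  have h := cpr_comp_eq_sum_fiber p X (fun _ => True) B
  simp only [if_true] at h
  rw [← h, cpr, div_eq_one_iff_eq hB]
  exact prb_congr p fun ω => by rw [true_and]

lemma cpr_block_eq_prod {ι β : Type*} [Fintype ι] [Fintype β] (D : Ω → ι → β) {B : Ω → Prop}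
    (hB : prb p B ≠ 0)
    (hind : ∀ d : ι → β, cpr p (fun ω => D ω = d) B = ∏ j, cpr p (fun ω => D ω j = d j) B)
    (S : Finset ι) (d : ι → β) :
    cpr p (fun ω => ∀ j ∈ S, D ω j = d j) B = ∏ j ∈ S, cpr p (fun ω => D ω j = d j) B := by
  set q : ι → β → ℝ := fun j b => cpr p (fun ω => D ω j = b) B
  set g : ι → β → ℝ := fun j b => if j ∈ S → b = d j then q j b else 0
  have hterm : ∀ d' : ι → β, (if ∀ j ∈ S, d' j = d j then cpr p (fun ω => D ω = d') B else 0)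
      = ∏ j, g j (d' j) := by
    intro d'
    rw [Fintype.prod_ite_zero, hind]
  have hmarginal : ∀ j, ∑ b, g j b = if j ∈ S then q j (d j) else 1 := by
    intro j
    by_cases hj : j ∈ S
    · simp [g, hj]
    · simpa [g, hj] using sum_cpr_eq_one p (fun ω => D ω j) hB
  calc cpr p (fun ω => ∀ j ∈ S, D ω j = d j) B
      = ∑ d' : ι → β, ∏ j, g j (d' j) := by
        rw [cpr_comp_eq_sum_fiber p D (fun d' => ∀ j ∈ S, d' j = d j)]
        exact sum_congr rfl fun d' _ => by convert hterm d'
    _ = ∏ j ∈ S, q j (d j) := by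
        rw [← Fintype.prod_sum, Finset.prod_congr rfl fun j _ => hmarginal j, prod_ite_mem,
          univ_inter]

lemma cpr_eq_cpr_block_mul_cpr_compl {ι β : Type*} [Fintype ι] [Fintype β] (D : Ω → ι → β)
    {B : Ω → Prop} (hB : prb p B ≠ 0)
    (hind : ∀ d : ι → β, cpr p (fun ω => D ω = d) B = ∏ j, cpr p (fun ω => D ω j = d j) B)
    (S : Finset ι) (d : ι → β) :
    cpr p (fun ω => D ω = d) B =
      cpr p (fun ω => ∀ j ∈ S, D ω j = d j) B * cpr p (fun ω => ∀ j ∉ S, D ω j = d j) B := by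
  have hcompl : cpr p (fun ω => ∀ j ∉ S, D ω j = d j) B =
      cpr p (fun ω => ∀ j ∈ Sᶜ, D ω j = d j) B := by
    simp only [mem_compl]
  rw [hcompl, cpr_block_eq_prod p D hB hind, cpr_block_eq_prod p D hB hind, hind,
    prod_mul_prod_compl]

lemma prb_block_and_eq_ite {ι β E : Type*} (D : Ω → ι → β) (S : Finset ι) (g : (ι → β) → E)
    (hg : ∀ d d', (∀ j ∈ S, d j = d' j) → g d = g d') (d : ι → β) (s : E) (R : Ω → Prop) :
    prb p (fun ω => (∀ j ∈ S, D ω j = d j) ∧ (g (D ω) = s ∧ R ω)) =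
      if g d = s then prb p (fun ω => (∀ j ∈ S, D ω j = d j) ∧ R ω) else 0 := by
  have hblock : ∀ ω, (∀ j ∈ S, D ω j = d j) → g (D ω) = g d := fun ω h => hg _ _ h
  split_ifs with hs
  · exact prb_congr p fun ω =>
      ⟨fun ⟨h, _, hR⟩ => ⟨h, hR⟩, fun ⟨h, hR⟩ => ⟨h, (hblock ω h).trans hs, hR⟩⟩
  · refine (prb_congr p fun ω => ⟨fun ⟨h, hgs, _⟩ => hs ((hblock ω h).symm.trans hgs),
      False.elim⟩).trans ?_
    simp [prb]

end FiniteProbability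

theorem stmt17_general {Ω : Type*} [Fintype Ω] {n : ℕ} {E : Type*}
    (p : Ω → ℝ)
    (Y : Fin n → (Fin n → Bool) → Ω → ℝ) (D : Ω → Fin n → Bool)
    (C : Fin n → Ω → Prop) (N : Fin n → Finset (Fin n))
    (f : Fin n → (Fin n → Bool) → E) (i : Fin n) (s : E)
    -- `f` is a K-neighborhood exposure mapping
    (hf : ∀ (d d' : Fin n → Bool), (∀ j ∈ N i, d j = d' j) → f i d = f i d')
    -- components of D mutually independent conditional on 𝒞ᵢ
    (hind : ∀ d : Fin n → Bool,
      cpr p (fun ω => D ω = d) (C i) = ∏ j, cpr p (fun ω => D ω j = d j) (C i))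
    -- unconfoundedness
    (hunc : ∀ (d dvec : Fin n → Bool),
      eiv p (fun ω => Y i d ω) (fun ω => D ω = dvec ∧ C i ω) * prb p (C i) =
        eiv p (fun ω => Y i d ω) (C i) * prb p (fun ω => D ω = dvec ∧ C i ω))
    -- overlap
    (hC : 0 < prb p (C i)) :
    cexp p (fun ω => Y i (D ω) ω) (fun ω => f i (D ω) = s ∧ C i ω) =
      ∑ d : Fin n → Bool,
        cexp p (fun ω => Y i d ω) (C i) *
          cpr p (fun ω => ∀ j ∈ N i, D ω j = d j) (fun ω => f i (D ω) = s ∧ C i ω) *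
          cpr p (fun ω => ∀ j ∉ N i, D ω j = d j) (C i) := by
  rw [cexp, eiv_comp_eq_sum_fiber p D (Y i) (fun d => f i d = s) (C i), sum_div]
  refine sum_congr rfl fun d _ => ?_
  have hexposure := prb_block_and_eq_ite p D (N i) (f i) hf d s (C i)
  split_ifs with hs
  · have hunc_d : eiv p (Y i d) (fun ω => D ω = d ∧ C i ω) =
        cexp p (Y i d) (C i) * prb p (fun ω => D ω = d ∧ C i ω) := by
      rw [cexp, div_mul_eq_mul_div, ← hunc d d, mul_div_cancel_right₀ _ hC.ne']
    have hsplit : prb p (fun ω => D ω = d ∧ C i ω) =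
        prb p (fun ω => (∀ j ∈ N i, D ω j = d j) ∧ C i ω) *
          cpr p (fun ω => ∀ j ∉ N i, D ω j = d j) (C i) := by
      rw [prb_and_eq_cpr_mul p hC.ne', prb_and_eq_cpr_mul p hC.ne',
        cpr_eq_cpr_block_mul_cpr_compl p D hC.ne' hind (N i)]
      ring
    rw [hunc_d, hsplit, cpr.eq_def p (fun ω => ∀ j ∈ N i, D ω j = d j), hexposure, if_pos hs]
    ring
  · rw [cpr_eq_zero_of_prb_eq_zero p (hexposure.trans (if_neg hs)), mul_zero, zero_mul, zero_div]

/-- if the components of `D` are mutually independent conditional on `𝒞ᵢ`,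
`Tᵢ = f(D_{N(i,K)})` is a K-neighborhood exposure mapping with `P(Tᵢ = s, 𝒞ᵢ) > 0`, and
unconfoundedness `Yᵢ(·) ⊥ D | 𝒞ᵢ` holds, then
`E[Yᵢ | Tᵢ = s, 𝒞ᵢ] = Σ_d E[Yᵢ(d) | 𝒞ᵢ] · P(D_{N(i,K)} = d_{N(i,K)} | Tᵢ=s, 𝒞ᵢ) ·
P(D_{−N(i,K)} = d_{−N(i,K)} | 𝒞ᵢ)`. -/
theorem stmt17 {Ω : Type*} [Fintype Ω] {n : ℕ} {E : Type*}
    (p : Ω → ℝ) (hp : ∀ ω, 0 ≤ p ω) (hp1 : ∑ ω, p ω = 1)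
    (Y : Fin n → (Fin n → Bool) → Ω → ℝ) (D : Ω → Fin n → Bool)
    (C : Fin n → Ω → Prop) (N : Fin n → Finset (Fin n))
    (f : Fin n → (Fin n → Bool) → E) (i : Fin n) (s : E)
    -- `f` is a K-neighborhood exposure mapping
    (hf : ∀ (d d' : Fin n → Bool), (∀ j ∈ N i, d j = d' j) → f i d = f i d')
    -- components of D mutually independent conditional on 𝒞ᵢ
    (hind : ∀ d : Fin n → Bool,
      cpr p (fun ω => D ω = d) (C i) = ∏ j, cpr p (fun ω => D ω j = d j) (C i))
    -- unconfoundedness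
    (hunc : ∀ (d dvec : Fin n → Bool),
      eiv p (fun ω => Y i d ω) (fun ω => D ω = dvec ∧ C i ω) * prb p (C i) =
        eiv p (fun ω => Y i d ω) (C i) * prb p (fun ω => D ω = dvec ∧ C i ω))
    -- overlap
    (hC : 0 < prb p (C i))
    (hpos : 0 < prb p (fun ω => f i (D ω) = s ∧ C i ω)) :
    cexp p (fun ω => Y i (D ω) ω) (fun ω => f i (D ω) = s ∧ C i ω) =
      ∑ d : Fin n → Bool,
        cexp p (fun ω => Y i d ω) (C i) *
          cpr p (fun ω => ∀ j ∈ N i, D ω j = d j) (fun ω => f i (D ω) = s ∧ C i ω) *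
          cpr p (fun ω => ∀ j ∉ N i, D ω j = d j) (C i) :=
  stmt17_general p Y D C N f i s hf hind hunc hC
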